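/- Let m and n be non-negative integers and let x_1,…,x_n be nonzero complex numbers such that the 2n numbers x_1, x_1^{-1}, …, x_n, x_n^{-1} are pairwise distinct. Then s_{((2m)^n)}(x_1, x_1^{-1}, x_2, x_2^{-1}, …, x_n, x_n^{-1}) = (1/D_1(n)) · Σ_{A,B⊆[n], |A|+|B|=n} (−1)^{(Σ_{a∈A} a)+(Σ_{b∈B} b)+n|B|−binom(n+1,2)} · (∏_{a∈A} x_a)^{2m+n} · (∏_{b∈B} x_b^{−1})^{2m+n} · V(A)·V(B^{−1})·R(A,B^{−1})·V(A^c)·V((B^c)^{−1})·R(A^c,(B^c)^{−1}), where D_1(n) = V([n])·V([n]^{−1})·R([n],[n]^{−1}), and A^c, B^c denote the complements of A, B in [n]. -/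

import Mathlib

/-!
Laplace-expand the numerator determinant of `s_{(k^n)}(y₁, …, y_{n+l})` along its first `n`
columns. For an `n`-subset `S` of the rows both complementary minors are Vandermonde determinants
(the first one with every row scaled by `y_p^{k+l}`), and together with the cross factor
`∏_{p ∈ S, q ∉ S} (y_p - y_q)` they reassemble the full Vandermonde denominator up to the sign of
the shuffle. Hence `s_{(k^n)}(y) = ∑_S (∏_{p ∈ S} y_p)^{k+l} / ∏_{p ∈ S, q ∉ S} (y_p - y_q)`.

For `y = (x₁, x₁⁻¹, …, xₙ, xₙ⁻¹)` write `S = {x_a : a ∈ A} ∪ {x_b⁻¹ : b ∈ B}`. Splitting the cross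
factor of `S` along `A, Aᶜ, B, Bᶜ` and multiplying it by
`V(A) V(B⁻¹) R(A, B⁻¹) V(Aᶜ) V((Bᶜ)⁻¹) R(Aᶜ, (Bᶜ)⁻¹)` gives back `±D₁(n)`, where the sign
counts the pairs `b < a` with `a ∈ A`, `b ∉ A` (and likewise for `B`), plus `|Aᶜ| |B|`.
-/

open Matrix Finset

/-- The `2n` variables `x₁, x₁⁻¹, x₂, x₂⁻¹, …, xₙ, xₙ⁻¹`. -/
noncomputable def pairVars {n : ℕ} (x : Fin n → ℂ) : Fin (2 * n) → ℂ :=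
  fun i =>
    if (i : ℕ) % 2 = 0 then x ⟨(i : ℕ) / 2, by have := i.isLt; omega⟩
    else (x ⟨(i : ℕ) / 2, by have := i.isLt; omega⟩)⁻¹
/-- The Schur function `s_λ(x₁,…,x_N)` as a ratio of determinants,
for an integer shape `lam` (indexed by `Fin N`, i.e. 0-based). -/
noncomputable def schurChar {N : ℕ} (lam : Fin N → ℤ) (x : Fin N → ℂ) : ℂ :=
  Matrix.det (Matrix.of fun h t : Fin N =>
      x h ^ (lam t + (N : ℤ) - 1 - ((t : ℕ) : ℤ))) /
    Matrix.det (Matrix.of fun h t : Fin N => x h ^ ((N : ℤ) - 1 - ((t : ℕ) : ℤ)))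
/-- `V(A) = ∏_{a,b ∈ A, a < b} (x_a - x_b)`. -/
noncomputable def Vprod {M : ℕ} (x : Fin M → ℂ) (A : Finset (Fin M)) : ℂ :=
  ∏ a ∈ A, ∏ b ∈ A, if a < b then x a - x b else 1

/-- `R(A, B⁻¹) = ∏_{a ∈ A} ∏_{b ∈ B} (x_a - x_b⁻¹)`. -/
noncomputable def Rprod {M : ℕ} (x : Fin M → ℂ) (A B : Finset (Fin M)) : ℂ :=
  ∏ a ∈ A, ∏ b ∈ B, (x a - (x b)⁻¹)

open Equiv

theorem Fin.castAdd_lt_natAdd {k l : ℕ} (i : Fin k) (j : Fin l) :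
    Fin.castAdd l i < Fin.natAdd k j := by
  simp only [Fin.lt_def, Fin.val_castAdd, Fin.val_natAdd]
  omega

section Vandermonde

variable {N : ℕ}

theorem det_vandermonde_rev (v : Fin N → ℂ) :
    det (of fun i j : Fin N => v i ^ (N - 1 - (j : ℕ))) = Vprod v univ := by
  have hrev : (of fun i j : Fin N => v i ^ (N - 1 - (j : ℕ))) =
      (vandermonde (v ∘ Fin.rev)).submatrix Fin.revPerm Fin.revPerm := by
    ext i j
    simp only [of_apply, submatrix_apply, vandermonde_apply, Fin.revPerm_apply,
      Function.comp_apply, Fin.rev_rev, Fin.val_rev]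
    congr 1
    omega
  rw [hrev, det_submatrix_equiv_self, det_vandermonde, Vprod, prod_comm]
  refine Fintype.prod_equiv Fin.revPerm _ _ fun i => ?_
  rw [← prod_filter]
  exact prod_nbij' Fin.rev Fin.rev (by simp) (fun a h => by simpa [Fin.lt_rev_iff] using h)
    (by simp) (by simp) (by simp)

theorem det_vandermonde_rev_zpow (v : Fin N → ℂ) :
    det (of fun i j : Fin N => v i ^ ((N : ℤ) - 1 - ((j : ℕ) : ℤ))) = Vprod v univ := by
  rw [← det_vandermonde_rev]
  congr 1
  ext i j
  rw [of_apply, of_apply, ← zpow_natCast]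
  congr 1
  omega

theorem det_vandermonde_rev_pow_add (v : Fin N → ℂ) (c : ℕ) :
    det (of fun i j : Fin N => v i ^ (c + (N - 1 - (j : ℕ)))) =
      (∏ i, v i) ^ c * Vprod v univ := by
  calc det (of fun i j : Fin N => v i ^ (c + (N - 1 - (j : ℕ))))
      = det (of fun i j => v i ^ c * (of fun i j : Fin N => v i ^ (N - 1 - (j : ℕ))) i j) := by
        simp only [pow_add, of_apply]
    _ = (∏ i, v i) ^ c * Vprod v univ := by rw [det_mul_column, det_vandermonde_rev, prod_pow]

theorem Vprod_comp_perm (v : Fin N → ℂ) (σ : Perm (Fin N)) :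
    Vprod (v ∘ σ) univ = Perm.sign σ * Vprod v univ := by
  rw [← det_vandermonde_rev, ← det_vandermonde_rev, ← det_permute]
  rfl

theorem Vprod_ne_zero {v : Fin N → ℂ} (hv : Function.Injective v) (A : Finset (Fin N)) :
    Vprod v A ≠ 0 :=
  prod_ne_zero_iff.2 fun a _ => prod_ne_zero_iff.2 fun b _ => by
    split_ifs with hab
    · exact sub_ne_zero.2 (hv.ne hab.ne)
    · exact one_ne_zero

theorem Vprod_univ_add {k l : ℕ} (v : Fin (k + l) → ℂ) :
    Vprod v univ = Vprod (v ∘ Fin.castAdd l) univ *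
      (∏ i, ∏ j, (v (Fin.castAdd l i) - v (Fin.natAdd k j))) *
        Vprod (v ∘ Fin.natAdd k) univ := by
  have hcc : ∀ i j : Fin k, Fin.castAdd l i < Fin.castAdd l j ↔ i < j := fun _ _ => Iff.rfl
  have hnc : ∀ i j, ¬ Fin.natAdd k i < Fin.castAdd l j := fun i j =>
    (Fin.castAdd_lt_natAdd j i).not_gt
  simp only [Vprod, Fin.prod_univ_add, prod_mul_distrib, hcc, Fin.castAdd_lt_natAdd, hnc,
    Fin.natAdd_lt_natAdd_iff, if_true, if_false, prod_const_one, mul_one, Function.comp_apply]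
  ring

end Vandermonde

section Laplace

variable {k l : ℕ}

def blockPerm (τ : Perm (Fin k) × Perm (Fin l)) : Perm (Fin (k + l)) :=
  finSumFinEquiv.permCongr (τ.1.sumCongr τ.2)

@[simp]
theorem blockPerm_castAdd (τ : Perm (Fin k) × Perm (Fin l)) (i : Fin k) :
    blockPerm τ (Fin.castAdd l i) = Fin.castAdd l (τ.1 i) := by
  simp [blockPerm, permCongr_apply]

@[simp]
theorem blockPerm_natAdd (τ : Perm (Fin k) × Perm (Fin l)) (j : Fin l) :
    blockPerm τ (Fin.natAdd k j) = Fin.natAdd k (τ.2 j) := by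
  simp [blockPerm, permCongr_apply]

theorem sign_blockPerm (τ : Perm (Fin k) × Perm (Fin l)) :
    Perm.sign (blockPerm τ) = Perm.sign τ.1 * Perm.sign τ.2 := by
  rw [blockPerm, Perm.sign_permCongr, Perm.sign_sumCongr]

theorem blockPerm_injective : Function.Injective (blockPerm (k := k) (l := l)) :=
  fun _ _ h => Perm.sumCongrHom_injective ((permCongr finSumFinEquiv).injective h)

theorem exists_blockPerm_eq {σ : Perm (Fin (k + l))}
    (hσ : ∀ i, ∃ j, σ (Fin.castAdd l i) = Fin.castAdd l j) : ∃ τ, blockPerm τ = σ := by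
  have hmaps : Set.MapsTo (finSumFinEquiv.symm.permCongr σ) (Set.range Sum.inl)
      (Set.range Sum.inl) := by
    rintro _ ⟨i, rfl⟩
    obtain ⟨j, hj⟩ := hσ i
    exact ⟨j, by simp [permCongr_apply, hj]⟩
  obtain ⟨τ, hτ⟩ := Perm.mem_sumCongrHom_range_of_perm_mapsTo_inl hmaps
  refine ⟨τ, ?_⟩
  rw [blockPerm, ← Perm.sumCongrHom_apply, hτ]
  ext x
  simp [permCongr_apply]

theorem exists_perm_castAdd_mem {S : Finset (Fin (k + l))} (hS : #S = k) :
    ∃ ρ : Perm (Fin (k + l)), ∀ i, ρ (Fin.castAdd l i) ∈ S := by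
  let e : {p : Fin (k + l) // p ∈ Set.range (Fin.castAdd l)} ≃ {p // p ∈ S} :=
    Fintype.equivOfCardEq (by
      rw [Fintype.card_coe, hS, Set.card_range_of_injective (Fin.castAdd_injective k l),
        Fintype.card_fin])
  exact ⟨e.extendSubtype, fun i => by
    rw [e.extendSubtype_apply_of_mem _ ⟨i, rfl⟩]
    exact (e _).2⟩

section Shuffle

variable {ρ : Perm (Fin (k + l))} {S : Finset (Fin (k + l))}

theorem image_castAdd_eq (hS : #S = k) (hρ : ∀ i, ρ (Fin.castAdd l i) ∈ S) :
    univ.image (ρ ∘ Fin.castAdd l) = S := by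
  refine eq_of_subset_of_card_le (by simpa [Finset.subset_iff] using hρ) ?_
  rw [card_image_of_injective _ (ρ.injective.comp (Fin.castAdd_injective k l)), card_univ,
    Fintype.card_fin, hS]

theorem image_natAdd_eq (hS : #S = k) (hρ : ∀ i, ρ (Fin.castAdd l i) ∈ S) :
    univ.image (ρ ∘ Fin.natAdd k) = Sᶜ := by
  refine eq_of_subset_of_card_le ?_ ?_
  · rw [← image_castAdd_eq hS hρ]
    intro p hp
    simp only [mem_image, mem_univ, true_and, Function.comp_apply, mem_compl, not_exists] at hp ⊢
    obtain ⟨j, rfl⟩ := hp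
    exact fun i h => (Fin.castAdd_lt_natAdd i j).ne (ρ.injective h)
  · rw [card_image_of_injective _ (ρ.injective.comp (Fin.natAdd_injective l k)), card_univ,
      Fintype.card_fin, card_compl, Fintype.card_fin, hS]
    omega

theorem sum_perm_image_castAdd_eq_sum_blockPerm {M : Type*} [AddCommMonoid M]
    (f : Perm (Fin (k + l)) → M) (hS : #S = k) (hρ : ∀ i, ρ (Fin.castAdd l i) ∈ S) :
    ∑ σ ∈ univ.filter fun σ : Perm (Fin (k + l)) => univ.image (σ ∘ Fin.castAdd l) = S, f σ =
      ∑ τ, f (ρ * blockPerm τ) := by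
  refine (sum_nbij (fun τ => ρ * blockPerm τ) (fun τ _ => ?_)
    (fun τ _ τ' _ h => blockPerm_injective (mul_left_cancel h)) (fun σ hσ => ?_)
    (fun _ _ => rfl)).symm
  · have hcomp : ⇑(ρ * blockPerm τ) ∘ Fin.castAdd l = (ρ ∘ Fin.castAdd l) ∘ τ.1 := by
      funext i
      simp
    simp only [mem_filter, mem_univ, true_and]
    rw [hcomp, ← image_image, image_univ_equiv, image_castAdd_eq hS hρ]
  · simp only [coe_filter, mem_univ, true_and, Set.mem_ofPred_eq] at hσ
    obtain ⟨τ, hτ⟩ := exists_blockPerm_eq (σ := ρ⁻¹ * σ) fun i => by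
      have hi : σ (Fin.castAdd l i) ∈ univ.image (ρ ∘ Fin.castAdd l) := by
        rw [image_castAdd_eq hS hρ, ← hσ]
        exact mem_image_of_mem _ (mem_univ i)
      obtain ⟨j, -, hj⟩ := mem_image.1 hi
      exact ⟨j, by rw [Perm.mul_apply, ← hj, Function.comp_apply, Perm.inv_eq_iff_eq]⟩
    exact ⟨τ, mem_coe.2 (mem_univ τ), by simp only [hτ, mul_inv_cancel_left]⟩

end Shuffle

theorem det_eq_sum_sign_smul_det_mul_det {R : Type*} [CommRing R]
    (M : Matrix (Fin (k + l)) (Fin (k + l)) R) (ρ : Finset (Fin (k + l)) → Perm (Fin (k + l)))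
    (hρ : ∀ S : Finset (Fin (k + l)), #S = k → ∀ i, ρ S (Fin.castAdd l i) ∈ S) :
    M.det = ∑ S with #S = k, Perm.sign (ρ S) •
      (det (of fun i j => M (ρ S (Fin.castAdd l i)) (Fin.castAdd l j)) *
        det (of fun i j => M (ρ S (Fin.natAdd k i)) (Fin.natAdd k j))) := by
  have hcard : ∀ σ : Perm (Fin (k + l)), #(univ.image (σ ∘ Fin.castAdd l)) = k := fun σ => by
    rw [card_image_of_injective _ (σ.injective.comp (Fin.castAdd_injective k l)), card_univ,
      Fintype.card_fin]
  rw [det_apply]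
  refine (sum_fiberwise_of_maps_to (t := univ.filter (#· = k))
    (fun σ _ => mem_filter.2 ⟨mem_univ _, hcard σ⟩) _).symm.trans
    (sum_congr rfl fun S hS => ?_)
  replace hS : #S = k := (mem_filter.1 hS).2
  rw [sum_perm_image_castAdd_eq_sum_blockPerm _ hS (hρ S hS)]
  simp only [det_apply, of_apply, sum_mul_sum, smul_sum, ← Fintype.sum_prod_type']
  refine sum_congr rfl fun τ _ => ?_
  rw [Perm.sign_mul, sign_blockPerm, Fin.prod_univ_add]
  simp only [Perm.mul_apply, blockPerm_castAdd, blockPerm_natAdd, Units.smul_def,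
    zsmul_eq_mul, Units.val_mul, Int.cast_mul]
  ring

end Laplace

section CrossDiff

variable {ι κ R : Type*} [Fintype ι] [Fintype κ] [DecidableEq ι] [DecidableEq κ] [CommRing R]

def crossDiff (y : ι → R) (S : Finset ι) : R :=
  ∏ p ∈ S, ∏ q ∈ Sᶜ, (y p - y q)

theorem crossDiff_ne_zero [IsDomain R] {y : ι → R} (hy : Function.Injective y) (S : Finset ι) :
    crossDiff y S ≠ 0 :=
  prod_ne_zero_iff.2 fun _ hp => prod_ne_zero_iff.2 fun _ hq =>
    sub_ne_zero.2 (hy.ne fun h => (mem_compl.1 hq) (h ▸ hp))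

theorem crossDiff_map_equiv (e : ι ≃ κ) (y : κ → R) (T : Finset ι) :
    crossDiff y (T.map e.toEmbedding) = crossDiff (y ∘ e) T := by
  have hcompl : (T.map e.toEmbedding)ᶜ = Tᶜ.map e.toEmbedding := by
    ext
    simp
  simp only [crossDiff, hcompl, prod_map, Equiv.coe_toEmbedding, Function.comp_apply]

theorem sum_prod_pow_div_crossDiff_comp_equiv {F : Type*} [Field F] (e : ι ≃ κ) (y : κ → F)
    (n K : ℕ) :
    ∑ S : Finset κ, (if #S = n then (∏ p ∈ S, y p) ^ K / crossDiff y S else 0) =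
      ∑ T : Finset ι, if #T = n then (∏ p ∈ T, (y ∘ e) p) ^ K / crossDiff (y ∘ e) T else 0 := by
  rw [← e.finsetCongr.sum_comp]
  simp only [Equiv.finsetCongr_apply, card_map, prod_map, crossDiff_map_equiv,
    Equiv.coe_toEmbedding, Function.comp_apply]

theorem Finset.compl_disjSum (A : Finset ι) (B : Finset κ) :
    (A.disjSum B)ᶜ = Aᶜ.disjSum Bᶜ := by
  ext (a | b) <;> simp

theorem crossDiff_sumElim_disjSum (u : ι → R) (v : κ → R) (A : Finset ι) (B : Finset κ) :
    crossDiff (Sum.elim u v) (A.disjSum B) =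
      crossDiff u A * (∏ a ∈ A, ∏ b ∈ Bᶜ, (u a - v b)) *
        ((∏ b ∈ B, ∏ a ∈ Aᶜ, (v b - u a)) * crossDiff v B) := by
  simp only [crossDiff, compl_disjSum, prod_disjSum, Sum.elim_inl, Sum.elim_inr,
    prod_mul_distrib]
  ring

theorem prod_castAdd_natAdd_eq_crossDiff {k l : ℕ} (y : Fin (k + l) → R)
    {ρ : Perm (Fin (k + l))} {S : Finset (Fin (k + l))} (hS : #S = k)
    (hρ : ∀ i, ρ (Fin.castAdd l i) ∈ S) :
    ∏ i, ∏ j, (y (ρ (Fin.castAdd l i)) - y (ρ (Fin.natAdd k j))) = crossDiff y S := by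
  rw [crossDiff, ← image_natAdd_eq hS hρ, ← image_castAdd_eq hS hρ,
    prod_image (ρ.injective.comp (Fin.castAdd_injective k l)).injOn]
  refine prod_congr rfl fun i _ => ?_
  rw [prod_image (ρ.injective.comp (Fin.natAdd_injective l k)).injOn]
  rfl

end CrossDiff

section Rectangle

variable {k l : ℕ}

theorem sign_mul_Vprod_castAdd_mul_Vprod_natAdd (y : Fin (k + l) → ℂ)
    {ρ : Perm (Fin (k + l))} {S : Finset (Fin (k + l))} (hS : #S = k)
    (hρ : ∀ i, ρ (Fin.castAdd l i) ∈ S) :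
    Perm.sign ρ * (Vprod (y ∘ ρ ∘ Fin.castAdd l) univ * Vprod (y ∘ ρ ∘ Fin.natAdd k) univ *
      crossDiff y S) = Vprod y univ := by
  have hsplit : Perm.sign ρ * Vprod y univ = Vprod (y ∘ ρ ∘ Fin.castAdd l) univ *
      crossDiff y S * Vprod (y ∘ ρ ∘ Fin.natAdd k) univ := by
    rw [← Vprod_comp_perm, ← prod_castAdd_natAdd_eq_crossDiff y hS hρ]
    exact Vprod_univ_add (y ∘ ρ)
  have hsign : ((Perm.sign ρ : ℤ) : ℂ) * (Perm.sign ρ : ℤ) = 1 := by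
    rw [← Int.cast_mul, ← Units.val_mul, Int.units_mul_self, Units.val_one, Int.cast_one]
  linear_combination (Perm.sign ρ : ℂ) * hsplit.symm + Vprod y univ * hsign

theorem schurChar_rectangle_eq_sum_div_crossDiff (k n l : ℕ) {y : Fin (n + l) → ℂ}
    (hy : Function.Injective y) :
    schurChar (fun t : Fin (n + l) => if (t : ℕ) < n then (k : ℤ) else 0) y =
      ∑ S : Finset (Fin (n + l)),
        if #S = n then (∏ p ∈ S, y p) ^ (k + l) / crossDiff y S else 0 := by
  choose! ρ hρ using fun (S : Finset (Fin (n + l))) (hS : #S = n) => exists_perm_castAdd_mem hS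
  simp only [schurChar]
  set M : Matrix (Fin (n + l)) (Fin (n + l)) ℂ := of fun h t => y h ^
    ((if (t : ℕ) < n then (k : ℤ) else 0) + ((n + l : ℕ) : ℤ) - 1 - ((t : ℕ) : ℤ)) with hM
  have hminor₁ : ∀ S, det (of fun i j => M (ρ S (Fin.castAdd l i)) (Fin.castAdd l j)) =
      (∏ i, (y ∘ ρ S ∘ Fin.castAdd l) i) ^ (k + l) * Vprod (y ∘ ρ S ∘ Fin.castAdd l) univ := by
    intro S
    rw [← det_vandermonde_rev_pow_add]
    congr 1
    ext i j
    simp only [hM, of_apply, Fin.val_castAdd, Fin.is_lt, if_true, Function.comp_apply]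
    rw [← zpow_natCast]
    congr 1
    omega
  have hminor₂ : ∀ S, det (of fun i j => M (ρ S (Fin.natAdd n i)) (Fin.natAdd n j)) =
      Vprod (y ∘ ρ S ∘ Fin.natAdd n) univ := by
    intro S
    rw [← det_vandermonde_rev]
    congr 1
    ext i j
    simp only [hM, of_apply, Fin.val_natAdd, add_lt_iff_neg_left, not_lt_zero, if_false,
      Function.comp_apply]
    rw [← zpow_natCast]
    congr 1
    omega
  rw [det_eq_sum_sign_smul_det_mul_det M ρ hρ, det_vandermonde_rev_zpow, sum_div, sum_filter]
  refine sum_congr rfl fun S _ => ?_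
  split_ifs with hS
  · have hprod : ∏ i, (y ∘ ρ S ∘ Fin.castAdd l) i = ∏ p ∈ S, y p := by
      conv_rhs => rw [← image_castAdd_eq hS (hρ S hS)]
      exact (prod_image ((ρ S).injective.comp (Fin.castAdd_injective n l)).injOn).symm
    rw [hminor₁, hminor₂, hprod, div_eq_div_iff (Vprod_ne_zero hy univ) (crossDiff_ne_zero hy S),
      Units.smul_def, zsmul_eq_mul]
    linear_combination
      (∏ p ∈ S, y p) ^ (k + l) * sign_mul_Vprod_castAdd_mul_Vprod_natAdd y hS (hρ S hS)
  · rfl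

end Rectangle

section Inversions

variable {n : ℕ}

def inversionCount (A : Finset (Fin n)) : ℕ := #{p ∈ Aᶜ ×ˢ A | p.1 < p.2}

theorem inversionCount_add_choose_two (A : Finset (Fin n)) :
    inversionCount A + (#A).choose 2 = ∑ a ∈ A, (a : ℕ) := by
  rw [inversionCount, ← card_product_filter_lt, add_comm, ← card_union_of_disjoint,
    ← filter_union, ← union_product, union_compl, card_filter, sum_product_right]
  · refine sum_congr rfl fun a _ => ?_
    rw [← card_filter, ← Fin.card_Iio]
    congr 1
    ext b
    simp
  · exact disjoint_filter_filter (disjoint_product.2 (Or.inl disjoint_compl_right))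

theorem Vprod_mul_Vprod_compl_mul_crossDiff (w : Fin n → ℂ) (A : Finset (Fin n)) :
    Vprod w A * Vprod w Aᶜ * crossDiff w A = (-1) ^ inversionCount A * Vprod w univ := by
  have hpair : ∀ a ∈ A, ∀ b ∈ Aᶜ,
      ((if a < b then w a - w b else 1) * if b < a then w b - w a else 1) =
        (if b < a then -1 else 1) * (w a - w b) := by
    intro a ha b hb
    have hab : a ≠ b := fun h => mem_compl.1 hb (h ▸ ha)
    rcases hab.lt_or_gt with h | h <;> simp [h, h.not_gt]
  have hsign : ∏ a ∈ A, ∏ b ∈ Aᶜ, (if b < a then (-1 : ℂ) else 1) = (-1) ^ inversionCount A := by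
    rw [← prod_product_right (f := fun p : Fin n × Fin n => if p.1 < p.2 then (-1 : ℂ) else 1),
      prod_ite, prod_const, prod_const_one, mul_one, inversionCount]
  have hsq : ((-1 : ℂ) ^ inversionCount A) ^ 2 = 1 := by
    rw [← pow_mul, pow_mul', neg_one_sq, one_pow]
  have hsplit : Vprod w univ = Vprod w A * Vprod w Aᶜ *
      ∏ a ∈ A, ∏ b ∈ Aᶜ, ((if a < b then w a - w b else 1) * if b < a then w b - w a else 1) := by
    simp only [Vprod, ← prod_mul_prod_compl A, prod_mul_distrib]
    rw [prod_comm (s := Aᶜ) (t := A)]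
    ring
  rw [hsplit, prod_congr rfl fun a ha => prod_congr rfl (hpair a ha)]
  simp only [prod_mul_distrib]
  rw [hsign, crossDiff]
  linear_combination (-(Vprod w A * Vprod w Aᶜ * ∏ a ∈ A, ∏ b ∈ Aᶜ, (w a - w b))) * hsq

theorem sign_exponent_eq_inversionCount {A B : Finset (Fin n)} (hAB : #A + #B = n) :
    (∑ a ∈ A, (((a : ℕ) : ℤ) + 1)) + (∑ b ∈ B, (((b : ℕ) : ℤ) + 1)) + (n : ℤ) * #B -
        ((n + 1).choose 2 : ℤ) =
      ((inversionCount A + inversionCount B + #Aᶜ * #B : ℕ) : ℤ) := by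
  have hA : (inversionCount A : ℚ) + ((#A).choose 2 : ℕ) = ∑ a ∈ A, ((a : ℕ) : ℚ) := by
    exact_mod_cast inversionCount_add_choose_two A
  have hB : (inversionCount B : ℚ) + ((#B).choose 2 : ℕ) = ∑ b ∈ B, ((b : ℕ) : ℚ) := by
    exact_mod_cast inversionCount_add_choose_two B
  have hAc : #Aᶜ = #B := by
    rw [card_compl, Fintype.card_fin]
    omega
  have hn : (n : ℚ) = #A + #B := by exact_mod_cast hAB.symm
  rw [← Int.cast_inj (α := ℚ)]
  push_cast [sum_add_distrib, sum_const, nsmul_eq_mul, mul_one, hAc, Nat.cast_choose_two]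
    at hA hB ⊢
  rw [hn]
  linear_combination -hA - hB

end Inversions

section PairVariables

variable {n : ℕ}

theorem Rprod_mul_Rprod_compl_right (x : Fin n → ℂ) (A B : Finset (Fin n)) :
    Rprod x A B * Rprod x A Bᶜ = Rprod x A univ := by
  simp only [Rprod, ← prod_mul_distrib, prod_mul_prod_compl]

theorem Rprod_mul_Rprod_compl_left (x : Fin n → ℂ) (A : Finset (Fin n)) :
    Rprod x A univ * Rprod x Aᶜ univ = Rprod x univ univ :=
  prod_mul_prod_compl A _

theorem prod_prod_inv_sub_eq_Rprod (x : Fin n → ℂ) (A B : Finset (Fin n)) :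
    ∏ b ∈ B, ∏ a ∈ A, ((x b)⁻¹ - x a) = (-1) ^ (#A * #B) * Rprod x A B := by
  rw [Rprod, prod_comm]
  simp only [← neg_sub (x _), prod_neg, prod_mul_distrib, prod_const, ← pow_mul, mul_comm #B]

theorem Rprod_ne_zero {x : Fin n → ℂ} (hx : Function.Injective (Sum.elim x fun i => (x i)⁻¹))
    (A B : Finset (Fin n)) : Rprod x A B ≠ 0 :=
  prod_ne_zero_iff.2 fun a _ => prod_ne_zero_iff.2 fun b _ =>
    sub_ne_zero.2 (hx.ne (Sum.inl_ne_inr (a := a) (b := b)))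

theorem Vprod_Rprod_mul_crossDiff_disjSum (x : Fin n → ℂ) (A B : Finset (Fin n)) :
    Vprod x A * Vprod (fun i => (x i)⁻¹) B * Rprod x A B *
        Vprod x Aᶜ * Vprod (fun i => (x i)⁻¹) Bᶜ * Rprod x Aᶜ Bᶜ *
        crossDiff (Sum.elim x fun i => (x i)⁻¹) (A.disjSum B) =
      (-1) ^ (inversionCount A + inversionCount B + #Aᶜ * #B) *
        (Vprod x univ * Vprod (fun i => (x i)⁻¹) univ * Rprod x univ univ) := by
  set x' : Fin n → ℂ := fun i => (x i)⁻¹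
  calc _ = (Vprod x A * Vprod x Aᶜ * crossDiff x A) * (Vprod x' B * Vprod x' Bᶜ * crossDiff x' B) *
          (Rprod x A B * Rprod x A Bᶜ * (Rprod x Aᶜ B * Rprod x Aᶜ Bᶜ)) * (-1) ^ (#Aᶜ * #B) := by
        rw [crossDiff_sumElim_disjSum, prod_prod_inv_sub_eq_Rprod,
          show ∏ a ∈ A, ∏ b ∈ Bᶜ, (x a - x' b) = Rprod x A Bᶜ from rfl]
        ring
    _ = _ := by
      rw [Vprod_mul_Vprod_compl_mul_crossDiff, Vprod_mul_Vprod_compl_mul_crossDiff,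
        Rprod_mul_Rprod_compl_right, Rprod_mul_Rprod_compl_right, Rprod_mul_Rprod_compl_left]
      ring

theorem prod_pow_div_crossDiff_disjSum {x : Fin n → ℂ}
    (hx : Function.Injective (Sum.elim x fun i => (x i)⁻¹)) {A B : Finset (Fin n)}
    (hAB : #A + #B = n) (K : ℕ) :
    (∏ p ∈ A.disjSum B, Sum.elim x (fun i => (x i)⁻¹) p) ^ K /
        crossDiff (Sum.elim x fun i => (x i)⁻¹) (A.disjSum B) =
      1 / (Vprod x univ * Vprod (fun i => (x i)⁻¹) univ * Rprod x univ univ) *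
        ((-1 : ℂ) ^ ((∑ a ∈ A, (((a : ℕ) : ℤ) + 1)) + (∑ b ∈ B, (((b : ℕ) : ℤ) + 1)) +
            (n : ℤ) * #B - ((n + 1).choose 2 : ℤ)) *
          (∏ a ∈ A, x a) ^ K * (∏ b ∈ B, (x b)⁻¹) ^ K *
          (Vprod x A * Vprod (fun i => (x i)⁻¹) B * Rprod x A B *
            Vprod x Aᶜ * Vprod (fun i => (x i)⁻¹) Bᶜ * Rprod x Aᶜ Bᶜ)) := by
  have hmerge := Vprod_Rprod_mul_crossDiff_disjSum x A B
  rw [sign_exponent_eq_inversionCount hAB, zpow_natCast, prod_disjSum, mul_pow,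
    div_eq_iff (crossDiff_ne_zero hx _)]
  simp only [Sum.elim_inl, Sum.elim_inr]
  set s := (-1 : ℂ) ^ (inversionCount A + inversionCount B + #Aᶜ * #B)
  set D := Vprod x univ * Vprod (fun i => (x i)⁻¹) univ * Rprod x univ univ
  set P := (∏ a ∈ A, x a) ^ K * (∏ b ∈ B, (x b)⁻¹) ^ K
  have hsq : s ^ 2 = 1 := by rw [← pow_mul, pow_mul', neg_one_sq, one_pow]
  have hD : D⁻¹ * D = 1 := inv_mul_cancel₀ <|
    mul_ne_zero (mul_ne_zero (Vprod_ne_zero (hx.comp Sum.inl_injective) univ)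
      (Vprod_ne_zero (hx.comp Sum.inr_injective) univ)) (Rprod_ne_zero hx univ univ)
  linear_combination (-(D⁻¹ * s * P)) * hmerge - P * s ^ 2 * hD - P * hsq

end PairVariables

theorem schurChar_comp_finCongr {N N' : ℕ} (h : N = N') (lam : Fin N' → ℤ) (y : Fin N' → ℂ) :
    schurChar (lam ∘ finCongr h) (y ∘ finCongr h) = schurChar lam y := by
  subst h
  rfl

noncomputable def finSumFinInterleave (n : ℕ) : Fin n ⊕ Fin n ≃ Fin (2 * n) :=
  Equiv.ofBijective (Sum.elim (fun a => ⟨2 * a, by omega⟩) fun b => ⟨2 * b + 1, by omega⟩) <| by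
    constructor
    · rintro (a | a) (b | b) h <;> simp [Fin.ext_iff] at h ⊢ <;> omega
    · intro p
      rcases Nat.even_or_odd' p with ⟨q, hq | hq⟩
      · exact ⟨.inl ⟨q, by omega⟩, Fin.ext (by simp [hq])⟩
      · exact ⟨.inr ⟨q, by omega⟩, Fin.ext (by simp [hq])⟩

theorem pairVars_comp_finSumFinInterleave {n : ℕ} (x : Fin n → ℂ) :
    pairVars x ∘ finSumFinInterleave n = Sum.elim x fun i => (x i)⁻¹ := by
  funext p
  rcases p with a | b
  · change pairVars x ⟨2 * a, _⟩ = x a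
    simp [pairVars]
  · change pairVars x ⟨2 * b + 1, _⟩ = (x b)⁻¹
    have hb : (2 * (b : ℕ) + 1) / 2 = b := by omega
    simp [pairVars, Nat.add_mod, hb]

/-- Here elements of `[n]` are represented 0-based, so the element sums `Σ_{a∈A} a` become
`Σ_{a∈A} (a+1)`. -/
theorem schur_even_rectangle_laplace_expansion_general
    (m n : ℕ) (x : Fin n → ℂ)
    (hdist : Function.Injective (pairVars x)) :
    schurChar (fun t : Fin (2 * n) => if (t : ℕ) < n then (2 * m : ℤ) else 0)
        (pairVars x) =
      (1 / (Vprod x Finset.univ * Vprod (fun i => (x i)⁻¹) Finset.univ *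
            Rprod x Finset.univ Finset.univ)) *
        ∑ A : Finset (Fin n), ∑ B : Finset (Fin n),
          if A.card + B.card = n then
            (-1 : ℂ) ^
                ((∑ a ∈ A, (((a : ℕ) : ℤ) + 1)) + (∑ b ∈ B, (((b : ℕ) : ℤ) + 1)) +
                  (n : ℤ) * B.card - ((n + 1).choose 2 : ℤ)) *
              (∏ a ∈ A, x a) ^ (2 * m + n) * (∏ b ∈ B, (x b)⁻¹) ^ (2 * m + n) *
              (Vprod x A * Vprod (fun i => (x i)⁻¹) B * Rprod x A B *
                Vprod x Aᶜ * Vprod (fun i => (x i)⁻¹) Bᶜ * Rprod x Aᶜ Bᶜ)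
          else 0 := by
  have hn : n + n = 2 * n := (two_mul n).symm
  let e : Fin n ⊕ Fin n ≃ Fin (n + n) := (finSumFinInterleave n).trans (finCongr hn.symm)
  have he : (pairVars x ∘ finCongr hn) ∘ e = Sum.elim x fun i => (x i)⁻¹ := by
    rw [← pairVars_comp_finSumFinInterleave]
    funext p
    simp [e]
  have hz : Function.Injective (Sum.elim x fun i => (x i)⁻¹) :=
    he ▸ hdist.comp ((finCongr hn).injective.comp e.injective)
  have hlam : (fun t : Fin (2 * n) => if (t : ℕ) < n then (2 * m : ℤ) else 0) ∘ finCongr hn =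
      fun t : Fin (n + n) => if (t : ℕ) < n then ((2 * m : ℕ) : ℤ) else 0 := by
    funext t
    simp
  rw [← schurChar_comp_finCongr hn, hlam,
    schurChar_rectangle_eq_sum_div_crossDiff _ _ _ (hdist.comp (finCongr hn).injective),
    sum_prod_pow_div_crossDiff_comp_equiv e, he, ← Finset.sumEquiv.toEquiv.symm.sum_comp,
    Fintype.sum_prod_type, mul_sum]
  refine sum_congr rfl fun A _ => ?_
  rw [mul_sum]
  refine sum_congr rfl fun B _ => ?_
  simp only [OrderIso.coe_symm_toEquiv, sumEquiv_symm_apply, card_disjSum]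
  split_ifs with hAB
  · exact prod_pow_div_crossDiff_disjSum hz hAB _
  · rw [mul_zero]

/-- **Expansion (4.3).**  Laplace expansion of the specialized Schur function
`s_{((2m)^n)}(x₁,x₁⁻¹,…,xₙ,xₙ⁻¹)` as a double sum over pairs of subsets
`A, B ⊆ [n]` with `|A| + |B| = n`.  Here elements of `[n]` are represented
0-based, so the element sums `Σ_{a∈A} a` become `Σ_{a∈A} (a+1)`. -/
theorem schur_even_rectangle_laplace_expansion
    (m n : ℕ) (x : Fin n → ℂ) (hx : ∀ i, x i ≠ 0)
    (hdist : Function.Injective (pairVars x)) :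
    schurChar (fun t : Fin (2 * n) => if (t : ℕ) < n then (2 * m : ℤ) else 0)
        (pairVars x) =
      (1 / (Vprod x Finset.univ * Vprod (fun i => (x i)⁻¹) Finset.univ *
            Rprod x Finset.univ Finset.univ)) *
        ∑ A : Finset (Fin n), ∑ B : Finset (Fin n),
          if A.card + B.card = n then
            (-1 : ℂ) ^
                ((∑ a ∈ A, (((a : ℕ) : ℤ) + 1)) + (∑ b ∈ B, (((b : ℕ) : ℤ) + 1)) +
                  (n : ℤ) * B.card - ((n + 1).choose 2 : ℤ)) *
              (∏ a ∈ A, x a) ^ (2 * m + n) * (∏ b ∈ B, (x b)⁻¹) ^ (2 * m + n) *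
              (Vprod x A * Vprod (fun i => (x i)⁻¹) B * Rprod x A B *
                Vprod x Aᶜ * Vprod (fun i => (x i)⁻¹) Bᶜ * Rprod x Aᶜ Bᶜ)
          else 0 :=
  schur_even_rectangle_laplace_expansion_general m n x hdist
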